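/- Let G be a König-Egerváry graph. Then ξ(G) + η(G) ≤ α(G), σ(G) + η(G) ≤ μ(G), and ξ(G) + 2η(G) + σ(G) ≤ |V(G)|. -/

import Mathlib

open scoped Classical

namespace KEG

variable {V : Type*}

/-- `S` is a stable (independent) set of vertices of `G`. -/
def IsStable (G : SimpleGraph V) (S : Finset V) : Prop :=
  ∀ ⦃x⦄, x ∈ S → ∀ ⦃y⦄, y ∈ S → ¬G.Adj x y

/-- The stability number `α(G)`: maximum cardinality of a stable set. -/
noncomputable def alphaNum (G : SimpleGraph V) : ℕ :=
  sSup {n | ∃ S : Finset V, IsStable G S ∧ S.card = n}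

/-- `S` is a maximum stable set of `G`. -/
def IsMaxStable (G : SimpleGraph V) (S : Finset V) : Prop :=
  IsStable G S ∧ S.card = alphaNum G

/-- `M` is a matching of `G`: a set of edges of `G`, pairwise non-incident. -/
def IsMatching (G : SimpleGraph V) (M : Finset (Sym2 V)) : Prop :=
  (∀ e ∈ M, e ∈ G.edgeSet) ∧
    ∀ e ∈ M, ∀ f ∈ M, e ≠ f → ∀ v : V, v ∈ e → v ∉ f

/-- The matching number `μ(G)`: maximum cardinality of a matching. -/
noncomputable def muNum (G : SimpleGraph V) : ℕ :=
  sSup {n | ∃ M : Finset (Sym2 V), IsMatching G M ∧ M.card = n}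

/-- A perfect matching: a matching covering every vertex. -/
def IsPerfectMatching (G : SimpleGraph V) (M : Finset (Sym2 V)) : Prop :=
  IsMatching G M ∧ ∀ v : V, ∃ e ∈ M, v ∈ e

/-- A maximal matching: a matching such that no edge of `G` can be added to it
while keeping pairwise non-incidence, i.e. every edge of `G` outside `M` is
incident to an edge of `M`. -/
def IsMaximalMatching (G : SimpleGraph V) (M : Finset (Sym2 V)) : Prop :=
  IsMatching G M ∧ ∀ e ∈ G.edgeSet, e ∉ M → ∃ f ∈ M, ∃ v : V, v ∈ e ∧ v ∈ f

/-- `G` is a König-Egerváry graph: `α(G) + μ(G) = |V(G)|`. -/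
def KonigEgervary (G : SimpleGraph V) [Fintype V] : Prop :=
  alphaNum G + muNum G = Fintype.card V

/-- `e` is an α-critical edge of `G`: `α(G - e) > α(G)`. -/
def IsAlphaCritical (G : SimpleGraph V) (e : Sym2 V) : Prop :=
  e ∈ G.edgeSet ∧ alphaNum G < alphaNum (G.deleteEdges {e})

/-- `e` is a μ-critical edge of `G`: `μ(G - e) < μ(G)`. -/
def IsMuCritical (G : SimpleGraph V) (e : Sym2 V) : Prop :=
  e ∈ G.edgeSet ∧ muNum (G.deleteEdges {e}) < muNum G

/-- `core(G)`: the set of vertices belonging to every maximum stable set of `G`. -/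
def core (G : SimpleGraph V) : Set V :=
  {v | ∀ S : Finset V, IsMaxStable G S → v ∈ S}

/-- `ξ(G) = |core(G)|`. -/
noncomputable def xi (G : SimpleGraph V) : ℕ := (core G).ncard

/-- `σ(G)`: the number of vertices belonging to no maximum stable set of `G`. -/
noncomputable def sigmaNum (G : SimpleGraph V) : ℕ :=
  {v : V | ∀ S : Finset V, IsMaxStable G S → v ∉ S}.ncard

/-- `η(G)`: the number of α-critical edges of `G`. -/
noncomputable def eta (G : SimpleGraph V) : ℕ :=
  {e : Sym2 V | IsAlphaCritical G e}.ncard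

/-- `N(A)`: the set of vertices adjacent to some vertex of `A`. -/
def nbhd (G : SimpleGraph V) (A : Set V) : Set V :=
  {v | ∃ a ∈ A, G.Adj a v}

/-- `N[A] = A ∪ N(A)`: the closed neighborhood of `A`. -/
def closedNbhd (G : SimpleGraph V) (A : Set V) : Set V :=
  A ∪ nbhd G A

/-!
Fix a maximum stable set `S` and a maximum matching `M`. In a König-Egerváry graph
`|V \ S| = |M|`, so every edge of `M` has exactly one endpoint in `S`. An α-critical edge
lies in every maximum matching (deleting it would raise `α` without lowering `μ`), and each
of its endpoints lies in some maximum stable set but not in all of them. Hence the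
α-critical edges form a matching whose endpoints in `S` avoid `core(G)` and whose endpoints
outside `S` avoid the vertices lying in no maximum stable set; counting them inside `S` and
inside `V \ S` gives the first two inequalities, and their sum gives the third.
-/

variable {G : SimpleGraph V}

section Bounds

variable [Fintype V]

theorem IsStable.card_le_alphaNum {S : Finset V} (hS : IsStable G S) : S.card ≤ alphaNum G :=
  le_csSup ⟨Fintype.card V, by rintro n ⟨T, -, rfl⟩; exact T.card_le_univ⟩ ⟨S, hS, rfl⟩

theorem exists_isMaxStable (G : SimpleGraph V) : ∃ S : Finset V, IsMaxStable G S :=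
  Nat.sSup_mem (s := {n | ∃ S : Finset V, IsStable G S ∧ S.card = n})
    ⟨0, ∅, fun _ hx => absurd hx (Finset.notMem_empty _), rfl⟩
    ⟨Fintype.card V, by rintro n ⟨T, -, rfl⟩; exact T.card_le_univ⟩

theorem IsMatching.card_le_muNum {M : Finset (Sym2 V)} (hM : IsMatching G M) :
    M.card ≤ muNum G :=
  le_csSup ⟨Fintype.card (Sym2 V), by rintro n ⟨N, -, rfl⟩; exact N.card_le_univ⟩
    ⟨M, hM, rfl⟩

theorem exists_isMatching_card_eq_muNum (G : SimpleGraph V) :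
    ∃ M : Finset (Sym2 V), IsMatching G M ∧ M.card = muNum G :=
  Nat.sSup_mem (s := {n | ∃ M : Finset (Sym2 V), IsMatching G M ∧ M.card = n})
    ⟨0, ∅, ⟨by simp, by simp⟩, rfl⟩
    ⟨Fintype.card (Sym2 V), by rintro n ⟨N, -, rfl⟩; exact N.card_le_univ⟩

end Bounds

theorem IsStable.exists_mem_notMem {S : Finset V} (hS : IsStable G S) {e : Sym2 V}
    (he : e ∈ G.edgeSet) : ∃ v ∈ e, v ∉ S := by
  induction e using Sym2.ind with
  | _ x y =>
    by_contra! h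
    exact hS (h x (Sym2.mem_mk_left x y)) (h y (Sym2.mem_mk_right x y)) he

theorem IsStable.of_deleteEdges {T : Finset V} {x y : V}
    (hT : IsStable (G.deleteEdges {s(x, y)}) T) (hy : y ∉ T) : IsStable G T := by
  intro a ha b hb hab
  refine hT ha hb (SimpleGraph.deleteEdges_adj.2 ⟨hab, ?_⟩)
  intro h
  rcases Sym2.eq_iff.1 (Set.mem_singleton_iff.1 h) with ⟨-, rfl⟩ | ⟨rfl, -⟩
  · exact hy hb
  · exact hy ha

theorem IsStable.mono {S T : Finset V} (hS : IsStable G S) (hTS : T ⊆ S) : IsStable G T :=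
  fun _ hx _ hy => hS (hTS hx) (hTS hy)

theorem IsMatching.mono {M N : Finset (Sym2 V)} (hM : IsMatching G M) (hNM : N ⊆ M) :
    IsMatching G N :=
  ⟨fun e he => hM.1 e (hNM he), fun e he f hf => hM.2 e (hNM he) f (hNM hf)⟩

theorem IsMatching.deleteEdges_singleton {M : Finset (Sym2 V)} (hM : IsMatching G M)
    {e : Sym2 V} (he : e ∉ M) : IsMatching (G.deleteEdges {e}) M := by
  refine ⟨fun f hf => ?_, hM.2⟩
  rw [SimpleGraph.edgeSet_deleteEdges]
  exact ⟨hM.1 f hf, fun hfe => he (Set.mem_singleton_iff.1 hfe ▸ hf)⟩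

theorem IsMatching.card_le_card_of_forall_exists_mem {M : Finset (Sym2 V)} (hM : IsMatching G M)
    {P : Finset V} (h : ∀ e ∈ M, ∃ v ∈ e, v ∈ P) : M.card ≤ P.card := by
  refine Finset.card_le_card_of_forall_subsingleton (fun e v => v ∈ e)
    (fun e he => (h e he).imp fun v hv => ⟨hv.2, hv.1⟩) fun v _ e he e' he' => ?_
  by_contra hne
  exact hM.2 e he.1 e' he'.1 hne v he.2 he'.2

theorem IsMatching.card_le_card_compl [Fintype V] {S : Finset V} (hS : IsStable G S)
    {M : Finset (Sym2 V)} (hM : IsMatching G M) : M.card ≤ Sᶜ.card :=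
  hM.card_le_card_of_forall_exists_mem fun e he => by
    simpa using hS.exists_mem_notMem (hM.1 e he)

theorem alphaNum_add_muNum_le [Fintype V] (G : SimpleGraph V) :
    alphaNum G + muNum G ≤ Fintype.card V := by
  obtain ⟨S, hS, hSα⟩ := exists_isMaxStable G
  obtain ⟨M, hM, hMμ⟩ := exists_isMatching_card_eq_muNum G
  have := hM.card_le_card_compl hS
  rw [Finset.card_compl] at this
  have := S.card_le_univ
  omega

theorem IsAlphaCritical.exists_isMaxStable_mem_notMem [Fintype V] {x y : V}
    (he : IsAlphaCritical G s(x, y)) :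
    ∃ T : Finset V, IsMaxStable G T ∧ x ∈ T ∧ y ∉ T := by
  obtain ⟨T, hT, hTα⟩ := exists_isMaxStable (G.deleteEdges {s(x, y)})
  have hαT : alphaNum G < T.card := hTα ▸ he.2
  -- `T` is too large to be stable in `G`, so it must contain both ends of the deleted edge.
  have hyT : y ∈ T := by_contra fun hy => (hT.of_deleteEdges hy).card_le_alphaNum.not_gt hαT
  have hxT : x ∈ T := by
    rw [Sym2.eq_swap] at hT
    exact by_contra fun hx => (hT.of_deleteEdges hx).card_le_alphaNum.not_gt hαT
  have hstable : IsStable G (T.erase y) :=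
    (hT.mono (T.erase_subset y)).of_deleteEdges (T.notMem_erase y)
  have hcard := hstable.card_le_alphaNum
  rw [Finset.card_erase_of_mem hyT] at hcard
  refine ⟨T.erase y, ⟨hstable, ?_⟩, Finset.mem_erase.2 ⟨?_, hxT⟩, T.notMem_erase y⟩
  · rw [Finset.card_erase_of_mem hyT]
    omega
  · rintro rfl
    exact ((SimpleGraph.mem_edgeSet G).1 he.1).ne rfl

theorem IsAlphaCritical.notMem_core [Fintype V] {e : Sym2 V} (he : IsAlphaCritical G e)
    {v : V} (hv : v ∈ e) : v ∉ core G := by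
  obtain ⟨w, rfl⟩ := Sym2.mem_iff_exists.1 hv
  rw [Sym2.eq_swap] at he
  obtain ⟨T, hT, -, hvT⟩ := he.exists_isMaxStable_mem_notMem
  exact fun hcore => hvT (hcore T hT)

theorem IsAlphaCritical.exists_isMaxStable_mem [Fintype V] {e : Sym2 V}
    (he : IsAlphaCritical G e) {v : V} (hv : v ∈ e) :
    ∃ T : Finset V, IsMaxStable G T ∧ v ∈ T := by
  obtain ⟨w, rfl⟩ := Sym2.mem_iff_exists.1 hv
  obtain ⟨T, hT, hvT, -⟩ := he.exists_isMaxStable_mem_notMem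
  exact ⟨T, hT, hvT⟩

namespace KonigEgervary

variable [Fintype V]

theorem mem_of_isAlphaCritical (hG : KonigEgervary G) {e : Sym2 V} (he : IsAlphaCritical G e)
    {M : Finset (Sym2 V)} (hM : IsMatching G M) (hMμ : M.card = muNum G) : e ∈ M := by
  by_contra heM
  have hμ := (hM.deleteEdges_singleton heM).card_le_muNum
  have := alphaNum_add_muNum_le (G.deleteEdges {e})
  have := he.2
  unfold KonigEgervary at hG
  omega

theorem exists_mem_of_mem_matching (hG : KonigEgervary G) {S : Finset V} (hS : IsMaxStable G S)
    {M : Finset (Sym2 V)} (hM : IsMatching G M) (hMμ : M.card = muNum G) {e : Sym2 V}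
    (he : e ∈ M) : ∃ v ∈ e, v ∈ S := by
  induction e using Sym2.ind with
  | _ x y =>
    by_contra! hxy
    -- Otherwise `M` would inject into `Sᶜ.erase y`, which has only `μ - 1` elements.
    have hinj : M.card ≤ (Sᶜ.erase y).card := by
      refine hM.card_le_card_of_forall_exists_mem fun f hf => ?_
      by_cases hfe : f = s(x, y)
      · subst hfe
        refine ⟨x, Sym2.mem_mk_left x y, Finset.mem_erase.2 ⟨?_, ?_⟩⟩
        · rintro rfl
          exact ((SimpleGraph.mem_edgeSet G).1 (hM.1 _ hf)).ne rfl
        · simpa using hxy x (Sym2.mem_mk_left x y)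
      · obtain ⟨v, hvf, hvS⟩ := hS.1.exists_mem_notMem (hM.1 f hf)
        refine ⟨v, hvf, Finset.mem_erase.2 ⟨?_, by simpa using hvS⟩⟩
        rintro rfl
        exact hM.2 f hf _ he hfe v hvf (Sym2.mem_mk_right x v)
    have hyS : y ∈ Sᶜ := by simpa using hxy y (Sym2.mem_mk_right x y)
    rw [Finset.card_erase_of_mem hyS, Finset.card_compl, hS.2] at hinj
    have := Finset.card_pos.2 ⟨_, he⟩
    unfold KonigEgervary at hG
    omega

theorem eta_le_card_of_forall_exists_mem (hG : KonigEgervary G) {P : Finset V}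
    (h : ∀ e, IsAlphaCritical G e → ∃ v ∈ e, v ∈ P) : eta G ≤ P.card := by
  obtain ⟨M, hM, hMμ⟩ := exists_isMatching_card_eq_muNum G
  set C := {e | IsAlphaCritical G e}.toFinset
  have hCM : C ⊆ M := fun e he => hG.mem_of_isAlphaCritical (by simpa [C] using he) hM hMμ
  rw [eta, Set.ncard_eq_toFinset_card']
  exact (hM.mono hCM).card_le_card_of_forall_exists_mem fun e he => h e (by simpa [C] using he)

end KonigEgervary

/-- In a König-Egerváry graph: `ξ + η ≤ α`, `σ + η ≤ μ`, and
`ξ + 2η + σ ≤ |V(G)|`. -/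
theorem stmt_14 {V : Type*} [Fintype V] (G : SimpleGraph V)
    (hG : KonigEgervary G) :
    xi G + eta G ≤ alphaNum G ∧ sigmaNum G + eta G ≤ muNum G ∧
      xi G + 2 * eta G + sigmaNum G ≤ Fintype.card V := by
  obtain ⟨S, hS⟩ := exists_isMaxStable G
  obtain ⟨M, hM, hMμ⟩ := exists_isMatching_card_eq_muNum G
  set A := {v : V | ∀ T : Finset V, IsMaxStable G T → v ∉ T}
  have hcoreS : (core G).toFinset ⊆ S := fun v hv => (Set.mem_toFinset.1 hv) S hS
  have hAS : A.toFinset ⊆ Sᶜ := fun v hv => Finset.mem_compl.2 ((Set.mem_toFinset.1 hv) S hS)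
  have hηS : eta G ≤ (S \ (core G).toFinset).card :=
    hG.eta_le_card_of_forall_exists_mem fun e he => by
      obtain ⟨v, hve, hvS⟩ :=
        hG.exists_mem_of_mem_matching hS hM hMμ (hG.mem_of_isAlphaCritical he hM hMμ)
      exact ⟨v, hve, Finset.mem_sdiff.2 ⟨hvS, by simpa using he.notMem_core hve⟩⟩
  have hηSc : eta G ≤ (Sᶜ \ A.toFinset).card :=
    hG.eta_le_card_of_forall_exists_mem fun e he => by
      obtain ⟨v, hve, hvS⟩ := hS.1.exists_mem_notMem he.1
      obtain ⟨T, hT, hvT⟩ := he.exists_isMaxStable_mem hve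
      refine ⟨v, hve, Finset.mem_sdiff.2 ⟨Finset.mem_compl.2 hvS, ?_⟩⟩
      simpa [A] using ⟨T, hT, hvT⟩
  have hξ : xi G = (core G).toFinset.card := Set.ncard_eq_toFinset_card' _
  have hσ : sigmaNum G = A.toFinset.card := Set.ncard_eq_toFinset_card' _
  rw [Finset.card_sdiff_of_subset hcoreS] at hηS
  rw [Finset.card_sdiff_of_subset hAS, Finset.card_compl] at hηSc
  have hcore_le := Finset.card_le_card hcoreS
  have hA_le := Finset.card_le_card hAS
  rw [Finset.card_compl] at hA_le
  have hSα := hS.2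
  unfold KonigEgervary at hG
  omega

end KEG
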